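/- Let E be a finite-dimensional real inner product space, c₀, C₀ > 0, and f : E → ℝ convex with c₀‖y‖ ≤ f(y) ≤ C₀(1 + ‖y‖) for all y. Then there is a constant C > 0 such that for all q ∈ (1, 2] and all y ∈ E, ( f_{q−1}(y) )^q ≥ f(y) − C q (q − 1), where f_{q−1} denotes the Moreau–Yosida approximation of f with parameter λ = q − 1. -/

import Mathlib

/-!
A convex function lying below `C₀ (1 + ‖y‖)` has all its secant slopes bounded by `C₀`, so it is
`C₀`-Lipschitz from above; minimizing `C₀ r - r² / (2λ)` over `r` then gives
`f_λ ≥ f - C₀² λ / 2`. Combined with Bernoulli's inequality `a^q ≥ q a - (q - 1)` for `a = f_λ(y) ≥ 0`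
and `λ = q - 1`, the error terms are of order `q (q - 1)`.
-/

open Filter Set Topology

/-- The Moreau–Yosida approximation `f_λ(y) = inf_{y'} ( f y' + ‖y - y'‖² / (2λ) )`. -/
noncomputable def moreauYosida {E : Type*} [NormedAddCommGroup E] [InnerProductSpace ℝ E]
    (f : E → ℝ) (lam : ℝ) (y : E) : ℝ :=
  ⨅ y' : E, (f y' + ‖y - y'‖ ^ 2 / (2 * lam))

theorem mul_sub_sub_one_le_rpow {a q : ℝ} (ha : 0 ≤ a) (hq : 1 ≤ q) :
    q * a - (q - 1) ≤ a ^ q := by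
  have := one_add_mul_self_le_rpow_one_add (s := a - 1) (by linarith) hq
  simp only [add_sub_cancel] at this
  linarith

theorem ConvexOn.le_add_mul_norm_sub_of_le_mul_one_add_norm {E : Type*} [NormedAddCommGroup E]
    [NormedSpace ℝ E] {f : E → ℝ} {C : ℝ} (hf : ConvexOn ℝ univ f) (hC : 0 ≤ C)
    (hup : ∀ y, f y ≤ C * (1 + ‖y‖)) (x z : E) :
    f z ≤ f x + C * ‖z - x‖ := by
  -- Compare the secant slope of `f` on `[x, z]` with the one on `[x, x + t • (z - x)]`, `t → ∞`.
  have hslope : ∀ t : ℝ, 1 ≤ t → f z - f x - C * ‖z - x‖ ≤ (C * (1 + ‖x‖) - f x) / t := by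
    intro t ht
    have ht0 : 0 < t := one_pos.trans_le ht
    set w := x + t • (z - x)
    have hz : (1 - t⁻¹) • x + t⁻¹ • w = z := by
      simp only [w, smul_add, smul_smul, inv_mul_cancel₀ ht0.ne', one_smul]
      module
    have hconv : f z ≤ (1 - t⁻¹) * f x + t⁻¹ * f w := by
      simpa only [hz, smul_eq_mul] using hf.2 (mem_univ x) (mem_univ w)
        (sub_nonneg.2 (inv_le_one_of_one_le₀ ht)) (inv_nonneg.2 ht0.le) (by ring)
    have hw : f w ≤ C * (1 + ‖x‖) + t * (C * ‖z - x‖) := by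
      have : ‖w‖ ≤ ‖x‖ + t * ‖z - x‖ := by
        simpa only [norm_smul, Real.norm_of_nonneg ht0.le] using norm_add_le x (t • (z - x))
      linarith [hup w, mul_le_mul_of_nonneg_left this hC]
    have hconv' : t * f z ≤ (t - 1) * f x + f w := by
      have := mul_le_mul_of_nonneg_left hconv ht0.le
      rwa [mul_add, ← mul_assoc, ← mul_assoc, mul_sub, mul_one, mul_inv_cancel₀ ht0.ne', one_mul]
        at this
    rw [le_div_iff₀ ht0]
    linarith
  have hlim : Tendsto (fun t : ℝ => (C * (1 + ‖x‖) - f x) / t) atTop (𝓝 0) :=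
    tendsto_const_nhds.div_atTop tendsto_id
  have := ge_of_tendsto hlim ((eventually_ge_atTop 1).mono hslope)
  linarith

section MoreauYosida

variable {E : Type*} [NormedAddCommGroup E] [InnerProductSpace ℝ E] {f : E → ℝ} {lam : ℝ}

theorem moreauYosida_nonneg (hf : ∀ y, 0 ≤ f y) (hlam : 0 ≤ lam) (y : E) :
    0 ≤ moreauYosida f lam y :=
  le_ciInf fun y' => add_nonneg (hf y') (by positivity)

theorem sub_le_moreauYosida_of_le_add_mul_norm {L : ℝ} (hlam : 0 < lam)
    (hf : ∀ x z, f z ≤ f x + L * ‖z - x‖) (y : E) :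
    f y - L ^ 2 / 2 * lam ≤ moreauYosida f lam y := by
  refine le_ciInf fun y' => ?_
  have hsq : 0 ≤ (‖y - y'‖ - L * lam) ^ 2 / (2 * lam) := by positivity
  have hexpand : (‖y - y'‖ - L * lam) ^ 2 / (2 * lam)
      = ‖y - y'‖ ^ 2 / (2 * lam) - L * ‖y - y'‖ + L ^ 2 / 2 * lam := by
    field_simp
    ring
  linarith [hf y' y]

end MoreauYosida

theorem moreauYosida_pow_ge_general
    {E : Type*} [NormedAddCommGroup E] [InnerProductSpace ℝ E]
    (c₀ C₀ : ℝ) (hc₀ : 0 < c₀) (hC₀ : 0 < C₀) (f : E → ℝ)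
    (hconv : ConvexOn ℝ Set.univ f)
    (hlow : ∀ y, c₀ * ‖y‖ ≤ f y)
    (hup : ∀ y, f y ≤ C₀ * (1 + ‖y‖)) :
    ∃ C : ℝ, 0 < C ∧ ∀ q : ℝ, 1 < q → q ≤ 2 → ∀ y : E,
      f y - C * q * (q - 1) ≤ (moreauYosida f (q - 1) y) ^ q := by
  have hf0 : ∀ y, 0 ≤ f y := fun y => (by positivity : 0 ≤ c₀ * ‖y‖).trans (hlow y)
  have hlip := hconv.le_add_mul_norm_sub_of_le_mul_one_add_norm hC₀.le hup
  refine ⟨C₀ ^ 2 / 2 + 1, by positivity, fun q hq1 _ y => ?_⟩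
  have hlam : 0 < q - 1 := by linarith
  have hbern := mul_sub_sub_one_le_rpow (moreauYosida_nonneg hf0 hlam.le y) hq1.le
  have hMY := sub_le_moreauYosida_of_le_add_mul_norm hlam hlip y
  linarith [mul_le_mul_of_nonneg_left hMY (by linarith : (0 : ℝ) ≤ q),
    mul_nonneg hlam.le (hf0 y), mul_nonneg hlam.le hlam.le]

/-- Inequality (ineq f) in Section 8: there is `C > 0` such that for all `q ∈ (1,2]`
and all `y`, `(f_{q-1}(y))^q ≥ f(y) - C q (q-1)`. -/
theorem moreauYosida_pow_ge
    {E : Type*} [NormedAddCommGroup E] [InnerProductSpace ℝ E] [FiniteDimensional ℝ E]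
    (c₀ C₀ : ℝ) (hc₀ : 0 < c₀) (hC₀ : 0 < C₀) (f : E → ℝ)
    (hconv : ConvexOn ℝ Set.univ f)
    (hlow : ∀ y, c₀ * ‖y‖ ≤ f y)
    (hup : ∀ y, f y ≤ C₀ * (1 + ‖y‖)) :
    ∃ C : ℝ, 0 < C ∧ ∀ q : ℝ, 1 < q → q ≤ 2 → ∀ y : E,
      f y - C * q * (q - 1) ≤ (moreauYosida f (q - 1) y) ^ q :=
  moreauYosida_pow_ge_general c₀ C₀ hc₀ hC₀ f hconv hlow hup
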